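/- Every projector over the θ-deformed (2n+1)-plane algebra C_alg(ℝ^{2n+1}_Θ) (obtained by adjoining a central hermitian generator x to C_alg(ℝ^{2n}_Θ)) has all entries in ℂ·1. -/

import Mathlib

/-!
Up to phases, the monomials `z^p z̄^q x^m` form a basis `b`, indexed by `u = (p, q, m)`, with
`star (b u) * b v ∈ ℂ ∙ b (σ u + v)` for `σ (p, q, m) = (q, p, m)`, and with
`star (b u) * b u = b (σ u + u)` exactly: the phase picked up by `star (z^p) * z^p` is
`exp (i ∑ pᵢ pⱼ θⱼᵢ) = 1` because `θ` is antisymmetric. Weigh `(p, q, m)` by `(p + q, m)` in the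
lexicographic order; the weight is additive along `(u, v) ↦ σ u + v`. If `w` has top weight among
the coefficients of a projection `P`, then in `P l l = ∑ₘ star (P m l) * P m l` the coefficient of
`b (σ w + w)` comes only from the diagonal products and is a positive sum of squared moduli. So
`σ w + w` is a coefficient of `P` as well, which forces the weight of `w` to be `0`: only the unit
monomial occurs.
-/

open Complex

namespace ThetaPlane

noncomputable def phase (t : ℝ) : ℂ := exp (t * I)

@[simp] lemma phase_zero : phase 0 = 1 := by simp [phase]

lemma phase_add (s t : ℝ) : phase (s + t) = phase s * phase t := by
  rw [phase, phase, phase, ← Complex.exp_add]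
  push_cast
  ring_nf

lemma star_phase (t : ℝ) : star (phase t) = phase (-t) := by
  rw [phase, phase, Complex.star_def, ← Complex.exp_conj]
  simp

lemma sum_mul_sum_mul_eq_zero {n : ℕ} {θ : Fin n → Fin n → ℝ} (hθ : ∀ i j, θ i j = -θ j i)
    (p : Fin n → ℝ) : ∑ j, p j * ∑ i, p i * θ j i = 0 := by
  have h : ∑ j, p j * ∑ i, p i * θ j i = -∑ j, p j * ∑ i, p i * θ j i := by
    simp_rw [Finset.mul_sum, ← Finset.sum_neg_distrib]
    rw [Finset.sum_comm]
    refine Finset.sum_congr rfl fun i _ => Finset.sum_congr rfl fun j _ => ?_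
    rw [hθ]
    ring
  linarith

section OrderedPow

variable {A : Type*} [Monoid A] {m : ℕ}

def orderedPow (f : Fin m → A) (p : Fin m → ℕ) : A := (List.ofFn fun i => f i ^ p i).prod

@[simp] lemma orderedPow_zero (f : Fin m → A) : orderedPow f 0 = 1 := by
  simp [orderedPow]

lemma orderedPow_succ (f : Fin (m + 1) → A) (p : Fin (m + 1) → ℕ) :
    orderedPow f p = f 0 ^ p 0 * orderedPow (fun i => f i.succ) (fun i => p i.succ) := by
  simp [orderedPow, List.ofFn_succ]

lemma commute_orderedPow {a : A} {f : Fin m → A} (h : ∀ i, Commute a (f i)) (p : Fin m → ℕ) :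
    Commute a (orderedPow f p) :=
  Commute.list_prod_right _ _ fun _ hb => by
    obtain ⟨i, rfl⟩ := List.mem_ofFn.1 hb
    exact (h i).pow_right _

end OrderedPow

section TwistComm

variable {A : Type*} [Ring A] [Algebra ℂ A]

def TwistComm (a b : A) (t : ℝ) : Prop := a * b = phase t • (b * a)

namespace TwistComm

variable {a b c : A} {s t : ℝ}

lemma symm (h : TwistComm a b t) : TwistComm b a (-t) := by
  rw [TwistComm, h, smul_smul, ← phase_add, neg_add_cancel, phase_zero, one_smul]

lemma mul_left (ha : TwistComm a c s) (hb : TwistComm b c t) : TwistComm (a * b) c (s + t) := by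
  rw [TwistComm, mul_assoc, hb, mul_smul_comm, ← mul_assoc, ha, smul_mul_assoc, smul_smul,
    ← phase_add, mul_assoc, add_comm]

lemma one_left (b : A) : TwistComm 1 b 0 := by simp [TwistComm]

lemma pow_left (h : TwistComm a b t) (k : ℕ) : TwistComm (a ^ k) b (k * t) := by
  induction k with
  | zero => simpa using one_left b
  | succ k ih => simpa [pow_succ, add_mul] using ih.mul_left h

lemma pow_right (h : TwistComm a b t) (k : ℕ) : TwistComm a (b ^ k) (k * t) := by
  simpa using (h.symm.pow_left k).symm

lemma list_ofFn_prod_left {m : ℕ} {f : Fin m → A} {τ : Fin m → ℝ}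
    (h : ∀ i, TwistComm (f i) b (τ i)) : TwistComm (List.ofFn f).prod b (∑ i, τ i) := by
  induction m with
  | zero => simpa using one_left b
  | succ m ih =>
    rw [List.ofFn_succ, List.prod_cons, Fin.sum_univ_succ]
    exact (h 0).mul_left (ih fun i => h i.succ)

variable [StarRing A] [StarModule ℂ A]

protected lemma star (h : TwistComm a b t) : TwistComm (star a) (star b) t := by
  have h' : TwistComm (star b) (star a) (-t) := by
    simpa [TwistComm, star_mul, star_smul, star_phase] using congrArg star h
  simpa using h'.symm

end TwistComm

variable {m : ℕ} {f : Fin m → A} {b : A} {τ : Fin m → ℝ}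

lemma TwistComm.orderedPow_left (h : ∀ i, TwistComm (f i) b (τ i)) (p : Fin m → ℕ) :
    TwistComm (orderedPow f p) b (∑ i, p i * τ i) :=
  TwistComm.list_ofFn_prod_left fun i => (h i).pow_left (p i)

lemma TwistComm.orderedPow_right (h : ∀ i, TwistComm b (f i) (τ i)) (p : Fin m → ℕ) :
    TwistComm b (orderedPow f p) (∑ i, p i * τ i) := by
  simpa using (TwistComm.orderedPow_left (fun i => (h i).symm) p).symm

lemma exists_orderedPow_mul_orderedPow (h : ∀ i j, ∃ t, TwistComm (f i) (f j) t)
    (p q : Fin m → ℕ) : ∃ α, orderedPow f p * orderedPow f q = phase α • orderedPow f (p + q) := by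
  induction m with
  | zero => exact ⟨0, by simp [orderedPow]⟩
  | succ m ih =>
    obtain ⟨α, hα⟩ := ih (fun i j => h i.succ j.succ) (fun i => p i.succ) (fun i => q i.succ)
    choose τ hτ using fun i : Fin m => h i.succ 0
    obtain ⟨β, hswap⟩ : ∃ β, TwistComm (orderedPow (fun i => f i.succ) fun i => p i.succ)
        (f 0 ^ q 0) β :=
      ⟨_, TwistComm.orderedPow_left (fun i => (hτ i).pow_right (q 0)) _⟩
    refine ⟨β + α, ?_⟩
    rw [orderedPow_succ f p, orderedPow_succ f q, orderedPow_succ f (p + q)]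
    set P := orderedPow (fun i => f i.succ) fun i => p i.succ
    set Q := orderedPow (fun i => f i.succ) fun i => q i.succ
    calc f 0 ^ p 0 * P * (f 0 ^ q 0 * Q) = f 0 ^ p 0 * (P * f 0 ^ q 0) * Q := by
          simp only [mul_assoc]
      _ = phase β • (f 0 ^ p 0 * f 0 ^ q 0 * (P * Q)) := by
          rw [hswap]; simp only [mul_smul_comm, smul_mul_assoc, mul_assoc]
      _ = _ := by rw [hα, ← pow_add, mul_smul_comm, smul_smul, ← phase_add]; rfl

variable [StarRing A] [StarModule ℂ A]

lemma exists_star_orderedPow (h : ∀ i j, ∃ t, TwistComm (f i) (f j) t) (p : Fin m → ℕ) :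
    ∃ α, star (orderedPow f p) = phase α • orderedPow (fun i => star (f i)) p := by
  induction m with
  | zero => exact ⟨0, by simp [orderedPow]⟩
  | succ m ih =>
    obtain ⟨α, hα⟩ := ih (fun i j => h i.succ j.succ) (fun i => p i.succ)
    choose τ hτ using fun i : Fin m => h i.succ 0
    obtain ⟨β, hswap⟩ : ∃ β, TwistComm (orderedPow (fun i => star (f i.succ)) fun i => p i.succ)
        (star (f 0) ^ p 0) β :=
      ⟨_, TwistComm.orderedPow_left (fun i => (hτ i).star.pow_right (p 0)) _⟩
    refine ⟨α + β, ?_⟩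
    rw [orderedPow_succ f p, orderedPow_succ _ p, star_mul, hα, star_pow, smul_mul_assoc, hswap,
      smul_smul, ← phase_add]

end TwistComm

end ThetaPlane

section GradedStarBasis

variable {ι M A : Type*} [Ring A] [StarRing A] [Algebra ℂ A]
  [AddCommMonoid M] [LinearOrder M] [IsOrderedCancelAddMonoid M]

structure IsGradedStarBasis (b : Module.Basis ι ℂ A) (μ : ι → ι → ι) (ω : ι → M) : Prop where
  star_mul : ∀ u v, ∃ c : ℂ, star (b u) * b v = c • b (μ u v)
  star_mul_self : ∀ u, star (b u) * b u = b (μ u u)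
  weight_mul : ∀ u v, ω (μ u v) = ω u + ω v
  eq_of_mul_eq : ∀ {u v w}, ω u = ω w → ω v = ω w → μ u v = μ w w → u = v

namespace IsGradedStarBasis

variable {b : Module.Basis ι ℂ A} {μ : ι → ι → ι} {ω : ι → M} [DecidableEq ι]

lemma repr_star_mul_apply (hb : IsGradedStarBasis b μ ω) {u v w : ι} (hu : ω u ≤ ω w)
    (hv : ω v ≤ ω w) :
    b.repr (star (b u) * b v) (μ w w) = if u = v ∧ μ u u = μ w w then 1 else 0 := by
  obtain ⟨c, hc⟩ := hb.star_mul u v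
  by_cases h : μ u v = μ w w
  · have hω : ω u = ω w ∧ ω v = ω w :=
      (add_eq_add_iff_eq_and_eq hu hv).1 (by rw [← hb.weight_mul, ← hb.weight_mul, h])
    obtain rfl := hb.eq_of_mul_eq hω.1 hω.2 h
    simp [hb.star_mul_self, h]
  · rw [hc, map_smul, Finsupp.smul_apply, b.repr_self, Finsupp.single_apply, if_neg h,
      if_neg fun ⟨huv, h'⟩ => h (huv ▸ h'), smul_zero]

variable [StarModule ℂ A]

lemma repr_star_mul_self_apply (hb : IsGradedStarBasis b μ ω) {a : A} {w : ι}
    (ha : ∀ u ∈ (b.repr a).support, ω u ≤ ω w) :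
    b.repr (star a * a) (μ w w) =
      ((∑ u ∈ (b.repr a).support with μ u u = μ w w, normSq (b.repr a u) : ℝ) : ℂ) := by
  set s := (b.repr a).support
  have ha' : a = ∑ u ∈ s, b.repr a u • b u := by
    conv_lhs => rw [← b.linearCombination_repr a]
    rfl
  rw [ha', star_sum, Finset.sum_mul_sum, ← ha', map_sum, Finsupp.finsetSum_apply]
  push_cast
  rw [Finset.sum_filter]
  refine Finset.sum_congr rfl fun u hu => ?_
  simp_rw [map_sum, Finsupp.finsetSum_apply, star_smul, smul_mul_smul_comm, map_smul,
    Finsupp.smul_apply, smul_eq_mul]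
  rw [Finset.sum_congr rfl fun v hv => by rw [hb.repr_star_mul_apply (ha u hu) (ha v hv)]]
  simp [ite_and, hu, Complex.normSq_eq_conj_mul_self]

lemma weight_nonpos_of_conjTranspose_mul_self (hb : IsGradedStarBasis b μ ω) {κ : Type*}
    [Fintype κ] {P : Matrix κ κ A} (hP : P.conjTranspose * P = P) (k l : κ) :
    ∀ u ∈ (b.repr (P k l)).support, ω u ≤ 0 := by
  classical
  set K := Finset.univ.biUnion fun kl : κ × κ => (b.repr (P kl.1 kl.2)).support
  have mem_K : ∀ {k l u}, u ∈ (b.repr (P k l)).support → u ∈ K := fun hu =>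
    Finset.mem_biUnion.2 ⟨(_, _), Finset.mem_univ _, hu⟩
  suffices ∀ u ∈ K, ω u ≤ 0 from fun u hu => this u (mem_K hu)
  intro u hu
  obtain ⟨w, hwK, hw_max⟩ := K.exists_max_image ω ⟨u, hu⟩
  obtain ⟨⟨k₀, l₀⟩, -, hw⟩ := Finset.mem_biUnion.1 hwK
  have hdiag : P l₀ l₀ = ∑ m, star (P m l₀) * P m l₀ := by
    conv_lhs => rw [← hP]
    simp [Matrix.mul_apply]
  have hcoeff : b.repr (P l₀ l₀) (μ w w) ≠ 0 := by
    rw [hdiag, map_sum, Finsupp.finsetSum_apply]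
    rw [Finset.sum_congr rfl fun m _ =>
      hb.repr_star_mul_self_apply fun v hv => hw_max v (mem_K hv)]
    norm_cast
    refine ne_of_gt (Finset.sum_pos' (fun m _ => Finset.sum_nonneg fun v _ => normSq_nonneg _)
      ⟨k₀, Finset.mem_univ _, ?_⟩)
    exact Finset.sum_pos' (fun v _ => normSq_nonneg _)
      ⟨w, Finset.mem_filter.2 ⟨hw, rfl⟩, normSq_pos.2 (Finsupp.mem_support_iff.1 hw)⟩
  have hww : ω w + ω w ≤ ω w :=
    hb.weight_mul w w ▸ hw_max _ (mem_K (Finsupp.mem_support_iff.2 hcoeff))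
  exact (hw_max u hu).trans (add_le_iff_nonpos_left.1 hww)

end IsGradedStarBasis

end GradedStarBasis

lemma Module.Basis.exists_eq_of_isUnit_smul {ι R M : Type*} [Semiring R] [AddCommMonoid M]
    [Module R M] (B : Module.Basis ι R M) {v : ι → M} (h : ∀ i, ∃ c : R, IsUnit c ∧ v i = c • B i) :
    ∃ b : Module.Basis ι R M, ⇑b = v := by
  choose c hc hv using h
  exact ⟨B.isUnitSMul hc, funext fun i => (B.isUnitSMul_apply hc i).trans (hv i).symm⟩

lemma Module.Basis.exists_eq_algebraMap_of_support_subset {ι R A : Type*} [CommSemiring R]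
    [Semiring A] [Algebra R A] (b : Module.Basis ι R A) {i : ι} (hi : b i = 1) {a : A}
    (ha : (b.repr a).support ⊆ {i}) : ∃ c : R, a = algebraMap R A c := by
  refine ⟨b.repr a i, ?_⟩
  rw [Algebra.algebraMap_eq_smul_one, ← hi, ← b.repr_symm_single,
    ← Finsupp.support_subset_singleton.1 ha, b.repr.symm_apply_apply]

namespace ThetaPlane

abbrev Index (n : ℕ) := (Fin n → ℕ) × (Fin n → ℕ) × ℕ

variable {n : ℕ}

def conjIndex (u : Index n) : Index n := (u.2.1, u.1, u.2.2)

def weight (u : Index n) : Lex (Lex (Fin n → ℕ) × ℕ) := toLex (toLex (u.1 + u.2.1), u.2.2)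

lemma weight_conjIndex_add (u v : Index n) : weight (conjIndex u + v) = weight u + weight v := by
  simp only [weight, conjIndex, ← toLex_add, Prod.mk_add_mk, Prod.fst_add, Prod.snd_add]
  rw [add_add_add_comm, add_comm u.2.1]

lemma eq_of_conjIndex_add_eq {u v w : Index n} (hu : weight u = weight w) (hv : weight v = weight w)
    (h : conjIndex u + v = conjIndex w + w) : u = v := by
  simp only [weight, toLex_inj, Prod.mk.injEq] at hu hv
  simp only [Prod.ext_iff, conjIndex, Prod.fst_add, Prod.snd_add] at h
  obtain ⟨h₁, h₂, -⟩ := h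
  have hp : u.1 = v.1 := add_right_cancel (b := v.2.1) (by rw [h₂, hv.1])
  have hq : u.2.1 = v.2.1 := add_left_cancel (a := v.1) (by rw [add_comm, h₁, hv.1, add_comm])
  exact Prod.ext hp (Prod.ext hq (hu.2.trans hv.2.symm))

lemma eq_zero_of_weight_nonpos {u : Index n} (h : weight u ≤ 0) : u = 0 := by
  have h0 : weight u = 0 :=
    h.antisymm (Prod.Lex.toLex_mono ⟨Pi.toLex_monotone (fun _ => Nat.zero_le _), Nat.zero_le _⟩)
  simp only [weight, toLex_eq_zero, Prod.mk_eq_zero, add_eq_zero] at h0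
  exact Prod.ext h0.1.1 (Prod.ext h0.1.2 h0.2)

section Monomial

variable {A : Type*} [Ring A] [StarRing A] [Algebra ℂ A] {θ : Fin n → Fin n → ℝ} {z : Fin n → A}
  {x : A}

/-- `(p, q, m)` indexes `z^p z̄^q x^m`; writing `z̄^q` as `star (z^q)`, whose factors come in the
reverse order, only changes it by a phase. -/
def monomial (z : Fin n → A) (x : A) (u : Index n) : A :=
  orderedPow z u.1 * star (orderedPow z u.2.1) * x ^ u.2.2

lemma star_monomial_mul_monomial (hx : star x = x) (hxz : ∀ i, Commute x (z i)) {u v : Index n}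
    {t : ℝ} (h : TwistComm (star (orderedPow z u.1)) (orderedPow z v.1) t) :
    star (monomial z x u) * monomial z x v = phase t •
      (orderedPow z u.2.1 * orderedPow z v.1 * star (orderedPow z v.2.1 * orderedPow z u.1) *
        x ^ (u.2.2 + v.2.2)) := by
  obtain ⟨p, q, m⟩ := u
  obtain ⟨p', q', m'⟩ := v
  set Z := orderedPow z
  have hstar : Commute x (star (Z q' * Z p)) := by
    simpa only [hx] using
      ((commute_orderedPow hxz q').mul_right (commute_orderedPow hxz p)).star_star
  have hcomm : Commute (x ^ m) (Z q * Z p' * star (Z q' * Z p)) :=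
    (((commute_orderedPow hxz q).mul_right (commute_orderedPow hxz p')).mul_right hstar).pow_left m
  simp only [monomial]
  rw [star_mul, star_mul, star_pow, hx, star_star]
  calc x ^ m * (Z q * star (Z p)) * (Z p' * star (Z q') * x ^ m')
      = x ^ m * (Z q * (star (Z p) * Z p') * star (Z q')) * x ^ m' := by simp only [mul_assoc]
    _ = phase t • (x ^ m * (Z q * Z p' * star (Z q' * Z p)) * x ^ m') := by
        rw [h, star_mul]
        simp only [mul_smul_comm, smul_mul_assoc, mul_assoc]
    _ = _ := by rw [hcomm.eq, pow_add, ← mul_assoc]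

variable [StarModule ℂ A]

lemma twistComm_star_orderedPow (hzbar : ∀ i j, TwistComm (star (z i)) (z j) (θ j i))
    (p q : Fin n → ℕ) :
    TwistComm (star (orderedPow z p)) (orderedPow z q) (∑ j, q j * ∑ i, p i * θ j i) :=
  TwistComm.orderedPow_right (fun j => by
    have h := (TwistComm.orderedPow_left (fun i => by simpa using (hzbar i j).star) p).star
    rwa [star_star] at h) q

lemma twistComm_star_orderedPow_self (hθ : ∀ i j, θ i j = -θ j i)
    (hzbar : ∀ i j, TwistComm (star (z i)) (z j) (θ j i)) (p : Fin n → ℕ) :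
    TwistComm (star (orderedPow z p)) (orderedPow z p) 0 := by
  simpa [sum_mul_sum_mul_eq_zero hθ] using twistComm_star_orderedPow hzbar p p

lemma star_monomial_mul_self (hθ : ∀ i j, θ i j = -θ j i)
    (hzz : ∀ i j, ∃ t, TwistComm (z i) (z j) t)
    (hzbar : ∀ i j, TwistComm (star (z i)) (z j) (θ j i)) (hx : star x = x)
    (hxz : ∀ i, Commute x (z i)) (u : Index n) :
    star (monomial z x u) * monomial z x u = monomial z x (conjIndex u + u) := by
  obtain ⟨α, hα⟩ := exists_orderedPow_mul_orderedPow hzz u.2.1 u.1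
  rw [star_monomial_mul_monomial hx hxz (twistComm_star_orderedPow_self hθ hzbar u.1), phase_zero,
    one_smul, hα, star_smul, smul_mul_smul_comm, star_phase, ← phase_add, add_neg_cancel,
    phase_zero, one_smul]
  simp only [monomial, conjIndex, Prod.fst_add, Prod.snd_add, add_comm u.1 u.2.1]

lemma exists_star_monomial_mul_monomial (hzz : ∀ i j, ∃ t, TwistComm (z i) (z j) t)
    (hzbar : ∀ i j, TwistComm (star (z i)) (z j) (θ j i)) (hx : star x = x)
    (hxz : ∀ i, Commute x (z i)) (u v : Index n) :
    ∃ c : ℂ, star (monomial z x u) * monomial z x v = c • monomial z x (conjIndex u + v) := by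
  obtain ⟨α, hα⟩ := exists_orderedPow_mul_orderedPow hzz u.2.1 v.1
  obtain ⟨β, hβ⟩ := exists_orderedPow_mul_orderedPow hzz v.2.1 u.1
  have hmon : monomial z x (conjIndex u + v) = orderedPow z (u.2.1 + v.1) *
      star (orderedPow z (v.2.1 + u.1)) * x ^ (u.2.2 + v.2.2) := by
    simp only [monomial, conjIndex, Prod.fst_add, Prod.snd_add, add_comm u.1 v.2.1]
  rw [star_monomial_mul_monomial hx hxz (twistComm_star_orderedPow hzbar u.1 v.1), hα, hβ, hmon,
    star_smul, smul_mul_smul_comm, smul_mul_assoc, smul_smul]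
  exact ⟨_, rfl⟩

lemma exists_monomial_eq_smul (hzz : ∀ i j, ∃ t, TwistComm (z i) (z j) t) (u : Index n) :
    ∃ c : ℂ, IsUnit c ∧ monomial z x u =
      c • (orderedPow z u.1 * orderedPow (fun i => star (z i)) u.2.1 * x ^ u.2.2) := by
  obtain ⟨α, hα⟩ := exists_star_orderedPow hzz u.2.1
  exact ⟨phase α, isUnit_iff_ne_zero.2 (exp_ne_zero _),
    by rw [monomial, hα, mul_smul_comm, smul_mul_assoc]⟩

end Monomial

end ThetaPlane

open ThetaPlane

theorem stmt_8_general {A : Type*} [Ring A] [StarRing A] [Algebra ℂ A] [StarModule ℂ A] {n : ℕ}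
    (θ : Fin n → Fin n → ℝ) (hθ : ∀ p q, θ p q = - θ q p)
    (z zbar : Fin n → A) (x : A)
    (hzz : ∀ p q, z p * z q = Complex.exp (θ p q * Complex.I) • (z q * z p))
    (hbz : ∀ p q, zbar p * z q = Complex.exp (θ q p * Complex.I) • (z q * zbar p))
    (hstarz : ∀ p, star (z p) = zbar p)
    (hxstar : star x = x)
    (hxz : ∀ p, x * z p = z p * x)
    (B : Module.Basis ((Fin n → ℕ) × (Fin n → ℕ) × ℕ) ℂ A)
    (hB : ∀ (p q : Fin n → ℕ) (m : ℕ), B (p, q, m) =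
      (List.ofFn fun i => z i ^ p i).prod * (List.ofFn fun i => zbar i ^ q i).prod * x ^ m) :
    ∀ (N : ℕ) (P : Matrix (Fin N) (Fin N) A),
      P * P = P → P.conjTranspose = P →
      ∀ k l, ∃ c : ℂ, P k l = algebraMap ℂ A c := by
  intro N P hP hH k l
  have hzz' : ∀ i j, ∃ t, TwistComm (z i) (z j) t := fun i j => ⟨θ i j, hzz i j⟩
  have hzbar : ∀ i j, TwistComm (star (z i)) (z j) (θ j i) := fun i j => by
    rw [hstarz]
    exact hbz i j
  obtain ⟨b, hb⟩ : ∃ b : Module.Basis (Index n) ℂ A, ⇑b = monomial z x :=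
    B.exists_eq_of_isUnit_smul fun ⟨p, q, m⟩ => by
      simpa only [hB, hstarz, orderedPow] using exists_monomial_eq_smul hzz' (x := x) (p, q, m)
  have hgraded : IsGradedStarBasis b (fun u v => conjIndex u + v) weight :=
    { star_mul := by simpa only [hb] using exists_star_monomial_mul_monomial hzz' hzbar hxstar hxz
      star_mul_self := by simpa only [hb] using star_monomial_mul_self hθ hzz' hzbar hxstar hxz
      weight_mul := weight_conjIndex_add
      eq_of_mul_eq := eq_of_conjIndex_add_eq }
  have hsupp : (b.repr (P k l)).support ⊆ {0} := fun u hu => Finset.mem_singleton.2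
    (eq_zero_of_weight_nonpos
      (hgraded.weight_nonpos_of_conjTranspose_mul_self (by rw [hH, hP]) k l u hu))
  exact b.exists_eq_algebraMap_of_support_subset (by simp [hb, monomial]) hsupp

/-- Every projector over the θ-deformed (2n+1)-plane algebra
`C_alg(ℝ^{2n+1}_Θ)`, obtained by adjoining a central hermitian generator `x` to
`C_alg(ℝ^{2n}_Θ)` (basis of monomials `z^p z̄^q x^m`), has all its entries in `ℂ·1`. -/
theorem stmt_8 {A : Type*} [Ring A] [StarRing A] [Algebra ℂ A] [StarModule ℂ A] {n : ℕ}
    (θ : Fin n → Fin n → ℝ) (hθ : ∀ p q, θ p q = - θ q p)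
    (z zbar : Fin n → A) (x : A)
    (hzz : ∀ p q, z p * z q = Complex.exp (θ p q * Complex.I) • (z q * z p))
    (hbb : ∀ p q, zbar p * zbar q = Complex.exp (θ p q * Complex.I) • (zbar q * zbar p))
    (hbz : ∀ p q, zbar p * z q = Complex.exp (θ q p * Complex.I) • (z q * zbar p))
    (hstarz : ∀ p, star (z p) = zbar p)
    (hxstar : star x = x)
    (hxz : ∀ p, x * z p = z p * x)
    (B : Module.Basis ((Fin n → ℕ) × (Fin n → ℕ) × ℕ) ℂ A)
    (hB : ∀ (p q : Fin n → ℕ) (m : ℕ), B (p, q, m) =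
      (List.ofFn fun i => z i ^ p i).prod * (List.ofFn fun i => zbar i ^ q i).prod * x ^ m) :
    ∀ (N : ℕ) (P : Matrix (Fin N) (Fin N) A),
      P * P = P → P.conjTranspose = P →
      ∀ k l, ∃ c : ℂ, P k l = algebraMap ℂ A c :=
  stmt_8_general θ hθ z zbar x hzz hbz hstarz hxstar hxz B hB
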